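/- arXiv:2003.05960 — 3 statements merged into one kernel-verified Lean document; each statement's English description precedes it below -/
import Mathlib

section
/- Let R be a commutative ℚ-algebra, D : R → R a derivation, and f ∈ R with D³(f) = 0. Then for every natural number t, D^{2t}(f^t) = ((2t)! / 2^t) · (D²f)^t. -/
/-!
By the Leibniz rule, `D^[2t+2] (f * f^t)` is a sum of terms `D^[i] f * D^[j] (f^t)` with
`i + j = 2t + 2`. Since `D^[3] f = 0`, only `i ≤ 2` contributes, and by induction
`D^[2t] (f^t)` is a multiple of `(D² f)^t`, which is killed by `D`; so `D^[j] (f^t) = 0` for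
`j > 2t` and only the term `i = 2` survives, contributing the factor `(2t+2 choose 2)`.
-/

open Finset

namespace Derivation

variable {R A : Type*} [CommSemiring R] [CommSemiring A] [Algebra R A] (D : Derivation R A A)

theorem iterate_map_mul (n : ℕ) (a b : A) :
    D^[n] (a * b) = ∑ ij ∈ antidiagonal n, n.choose ij.1 • (D^[ij.1] a * D^[ij.2] b) := by
  induction n with
  | zero => simp
  | succ n ih =>
    rw [sum_antidiagonal_choose_succ_nsmul (M := A) (fun i j => D^[i] a * D^[j] b) n]
    simp only [Function.iterate_succ_apply', ih, map_sum, map_nsmul, leibniz, smul_eq_mul,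
      smul_add, sum_add_distrib]
    congr 1
    refine sum_congr rfl fun ⟨i, j⟩ hij ↦ ?_
    rw [n.choose_symm_of_eq_add (HasAntidiagonal.mem_antidiagonal.1 hij).symm, mul_comm]

theorem iterate_eq_zero_of_le {a : A} {m n : ℕ} (ha : D^[m] a = 0) (hmn : m ≤ n) :
    D^[n] a = 0 := by
  obtain ⟨k, rfl⟩ := Nat.exists_eq_add_of_le hmn
  rw [add_comm, Function.iterate_add_apply, ha, Function.iterate_fixed D.map_zero]

theorem map_pow_eq_zero {a : A} (ha : D a = 0) (n : ℕ) : D (a ^ n) = 0 := by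
  rw [leibniz_pow, ha, smul_zero, smul_zero]

theorem iterate_two_mul_pow_succ {f : A} (hf : D^[3] f = 0) {t : ℕ}
    (ht : D^[2 * t + 1] (f ^ t) = 0) :
    D^[2 * (t + 1)] (f ^ (t + 1)) = (2 * t + 2).choose 2 • (D (D f) * D^[2 * t] (f ^ t)) := by
  rw [pow_succ', mul_add, mul_one, iterate_map_mul,
    sum_eq_single_of_mem (2, 2 * t) (HasAntidiagonal.mem_antidiagonal.2 (add_comm _ _))]
  · rfl
  rintro ⟨i, j⟩ hij hne
  rw [HasAntidiagonal.mem_antidiagonal] at hij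
  by_cases hi : 3 ≤ i
  · rw [D.iterate_eq_zero_of_le hf hi, zero_mul, smul_zero]
  · have hj : 2 * t + 1 ≤ j := by
      by_contra! hj
      exact hne (Prod.ext (by omega) (by omega))
    rw [D.iterate_eq_zero_of_le ht hj, mul_zero, smul_zero]

end Derivation

theorem factorial_two_mul_succ_div_two_pow (t : ℕ) :
    ((2 * (t + 1)).factorial : ℚ) / 2 ^ (t + 1) =
      (2 * t + 2).choose 2 * (((2 * t).factorial : ℚ) / 2 ^ t) := by
  rw [Nat.choose_two_right, Nat.cast_div (Nat.even_mul_pred_self _).two_dvd (by norm_num),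
    show 2 * (t + 1) = 2 * t + 1 + 1 by ring, Nat.factorial_succ, Nat.factorial_succ]
  push_cast
  field_simp
  ring

theorem iterated_derivation_power_two
    {R : Type*} [CommRing R] [Algebra ℚ R]
    (D : Derivation ℚ R R) (f : R) (hf : D (D (D f)) = 0) :
    ∀ t : ℕ, (⇑D)^[2 * t] (f ^ t) =
      (((2 * t).factorial : ℚ) / (2 ^ t : ℚ)) • (D (D f)) ^ t := by
  intro t
  induction t with
  | zero => simp
  | succ t ih =>
    have hvanish : D^[2 * t + 1] (f ^ t) = 0 := by
      rw [Function.iterate_succ_apply', ih, D.map_smul, D.map_pow_eq_zero hf, smul_zero]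
    rw [D.iterate_two_mul_pow_succ hf hvanish, ih, factorial_two_mul_succ_div_two_pow,
      mul_smul_comm, ← Nat.cast_smul_eq_nsmul ℚ, smul_smul, pow_succ']
end

section
/- Let R be a commutative ℚ-algebra with derivation D, and let x, y, z, u, s ∈ R satisfy D(x) = −y, D(y) = −2z, D(z) = 0, D(s) = u, D(u) = 0. Then for all natural numbers t, q, r, m, setting n = 2t + q + r, one has D^n(x^t · y^q · u^m · s^r) = (−2)^q · n! · z^{t+q} · u^{m+r}. -/
/-!
Give the monomial `x^t y^q u^m s^r` the weight `2t + q + r`. Then `D (x^t y^q u^m s^r)` is a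
combination of three monomials of weight one less, with coefficients `-t`, `-2qz` and `r`, all
killed by `D`. By induction on the weight `n`, `D^n` sends the monomial to
`(-2)^q n! z^(t+q) u^(m+r)`: the three terms contribute `2t`, `q` and `r` times the value at
`n - 1`, which add up to `n` times it.
-/

namespace Derivation

variable {S A : Type*} [CommSemiring S] [CommSemiring A] [Algebra S A] (D : Derivation S A A)

theorem map_ofNat (n : ℕ) [n.AtLeastTwo] : D (OfNat.ofNat n : A) = 0 := by
  rw [← Nat.cast_ofNat]
  exact D.map_natCast _

theorem iterate_map_mul_of_map_eq_zero {c : A} (hc : D c = 0) (k : ℕ) (a : A) :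
    (⇑D)^[k] (c * a) = c * (⇑D)^[k] a :=
  (Function.Commute.iterate_right (f := (c * ·)) (g := D)
    (fun b => by simp [leibniz, hc]) k a).symm

end Derivation

section WeightVector

variable {S R : Type*} [CommSemiring S] [CommRing R] [Algebra S R] {D : Derivation S R R}
  {x y z u s : R}

theorem map_monomial (hx : D x = -y) (hy : D y = -2 * z) (hs : D s = u) (hu : D u = 0)
    (t q m r : ℕ) :
    D (x ^ t * y ^ q * u ^ m * s ^ r) =
      -(t : R) * (x ^ (t - 1) * y ^ (q + 1) * u ^ m * s ^ r) +
        -2 * q * z * (x ^ t * y ^ (q - 1) * u ^ m * s ^ r) +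
        r * (x ^ t * y ^ q * u ^ (m + 1) * s ^ (r - 1)) := by
  simp only [Derivation.leibniz, Derivation.leibniz_pow, hx, hy, hs, hu, smul_eq_mul, nsmul_eq_mul]
  ring

theorem iterate_monomial (hx : D x = -y) (hy : D y = -2 * z) (hz : D z = 0) (hs : D s = u)
    (hu : D u = 0) (t q r m : ℕ) :
    (⇑D)^[2 * t + q + r] (x ^ t * y ^ q * u ^ m * s ^ r) =
      (-2) ^ q * (2 * t + q + r).factorial * z ^ (t + q) * u ^ (m + r) := by
  obtain ⟨n, hn⟩ : ∃ n, 2 * t + q + r = n := ⟨_, rfl⟩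
  rw [hn]
  induction n generalizing t q r m with
  | zero =>
    obtain ⟨rfl, rfl, rfl⟩ : t = 0 ∧ q = 0 ∧ r = 0 := by omega
    simp
  | succ k ih =>
    set V : R := (-2) ^ q * k.factorial * z ^ (t + q) * u ^ (m + r)
    have hx_term :
        -(t : R) * (⇑D)^[k] (x ^ (t - 1) * y ^ (q + 1) * u ^ m * s ^ r) = 2 * t * V := by
      rcases t with _ | t
      · simp
      rw [Nat.add_sub_cancel, ih t (q + 1) r m (by omega)]
      simp only [V, Nat.cast_succ, pow_succ, show t + 1 + q = t + (q + 1) by omega]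
      ring
    have hy_term : -2 * q * z * (⇑D)^[k] (x ^ t * y ^ (q - 1) * u ^ m * s ^ r) = q * V := by
      rcases q with _ | q
      · simp
      rw [Nat.add_sub_cancel, ih t q r m (by omega)]
      simp only [V, Nat.cast_succ, pow_succ, ← add_assoc]
      ring
    have hs_term : r * (⇑D)^[k] (x ^ t * y ^ q * u ^ (m + 1) * s ^ (r - 1)) = r * V := by
      rcases r with _ | r
      · simp
      rw [Nat.add_sub_cancel, ih t q r (m + 1) (by omega), show m + 1 + r = m + (r + 1) by omega]
    have hweight : (2 * t + q + r : R) = k + 1 := by norm_cast; rw [hn]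
    rw [Function.iterate_succ_apply, map_monomial hx hy hs hu, iterate_map_add, iterate_map_add,
      D.iterate_map_mul_of_map_eq_zero (c := -(t : R)) (by simp),
      D.iterate_map_mul_of_map_eq_zero (c := -2 * q * z) (by simp [hz, D.map_ofNat]),
      D.iterate_map_mul_of_map_eq_zero (c := (r : R)) (by simp),
      hx_term, hy_term, hs_term, Nat.factorial_succ, Nat.cast_mul, Nat.cast_succ]
    linear_combination V * hweight

end WeightVector

theorem weight_vector_computation
    {R : Type*} [CommRing R] [Algebra ℚ R]
    (D : Derivation ℚ R R) (x y z u s : R)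
    (hx : D x = -y) (hy : D y = -(2 : R) * z) (hz : D z = 0)
    (hs : D s = u) (hu : D u = 0) :
    ∀ t q r m : ℕ,
      (⇑D)^[2 * t + q + r] (x ^ t * y ^ q * u ^ m * s ^ r) =
        (-2 : R) ^ q * ((2 * t + q + r).factorial : R) * z ^ (t + q) * u ^ (m + r) :=
  iterate_monomial hx hy hz hs hu
end

section
/- Let K be a field, V a finite-dimensional K-vector space, φ : V → V a linear endomorphism, p ∈ K, and F ⊆ V a subspace. Assume that 1 − φ and 1 − pφ are both invertible on V. Consider the three-term complex C⁰ = V → C¹ = V ⊕ V ⊕ (V/F) → C² = V with differentials d⁰(x) = ((1−φ)x, 0, x mod F) and d¹(u, v, w) = −(1−pφ)v. Then: (a) d⁰ is injective (H⁰ = 0); (b) d¹ is surjective (H² = 0); (c) the map V/F → ker(d¹)/im(d⁰) sending w to the class of (0, 0, w) is an isomorphism. -/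
/-!
Both differentials only involve the first two components, through the invertible maps
`1 - φ` and `1 - pφ`. Hence `d⁰` is injective and `d¹` surjective, a cocycle has vanishing second
component, and subtracting the coboundary of `(1 - φ)⁻¹ u` kills its first component, leaving
`(0, 0, w)` for a unique `w : V ⧸ F`.
-/

namespace SemistableComplex

variable {R V W U X : Type*} [Ring R] [AddCommGroup V] [Module R V] [AddCommGroup W] [Module R W]
  [AddCommGroup U] [Module R U] [AddCommGroup X] [Module R X]

def d0 (f : V →ₗ[R] W) (F : Submodule R V) : V →ₗ[R] W × U × (V ⧸ F) :=
  f.prod ((0 : V →ₗ[R] U).prod F.mkQ)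

def d1 (g : U →ₗ[R] X) (F : Submodule R V) : W × U × (V ⧸ F) →ₗ[R] X :=
  g ∘ₗ LinearMap.fst R U (V ⧸ F) ∘ₗ LinearMap.snd R W (U × (V ⧸ F))

theorem d0_injective {f : V →ₗ[R] W} (hf : Function.Injective f) (F : Submodule R V) :
    Function.Injective (d0 (U := U) f F) :=
  fun _ _ h ↦ hf (congrArg Prod.fst h)

theorem d1_surjective {g : U →ₗ[R] X} (hg : Function.Surjective g) (F : Submodule R V) :
    Function.Surjective (d1 (W := W) g F) :=
  hg.comp ((LinearMap.fst_surjective (R := R)).comp (LinearMap.snd_surjective (R := R)))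

theorem exists_sub_mem_range_d0_of_d1_eq_zero {f : V →ₗ[R] W} {g : U →ₗ[R] X}
    (hf : Function.Surjective f) (hg : Function.Injective g) (F : Submodule R V)
    (x : W × U × (V ⧸ F)) (hx : d1 g F x = 0) :
    ∃ w : V ⧸ F, x - (0, 0, w) ∈ LinearMap.range (d0 f F) := by
  obtain ⟨u, v, w⟩ := x
  have hv : v = 0 := hg (hx.trans g.map_zero.symm)
  obtain ⟨a, rfl⟩ := hf u
  exact ⟨w - F.mkQ a, a, by simp [d0, hv]⟩

theorem eq_zero_of_mem_range_d0 {f : V →ₗ[R] W} (hf : Function.Injective f) {F : Submodule R V}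
    {w : V ⧸ F} (hw : ((0, 0, w) : W × U × (V ⧸ F)) ∈ LinearMap.range (d0 f F)) : w = 0 := by
  obtain ⟨a, ha⟩ := hw
  have ha0 : a = 0 := hf ((congrArg Prod.fst ha).trans f.map_zero.symm)
  simpa [d0, ha0] using (congrArg (Prod.snd ∘ Prod.snd) ha).symm

end SemistableComplex

open SemistableComplex in
theorem semistable_complex_cohomology_general
    {K V : Type*} [Field K] [AddCommGroup V] [Module K V]
    (φ : V →ₗ[K] V) (p : K) (F : Submodule K V)
    (h1 : Function.Bijective ((LinearMap.id : V →ₗ[K] V) - φ))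
    (h2 : Function.Bijective ((LinearMap.id : V →ₗ[K] V) - p • φ)) :
    let d0 : V →ₗ[K] V × V × (V ⧸ F) :=
      ((LinearMap.id : V →ₗ[K] V) - φ).prod ((0 : V →ₗ[K] V).prod F.mkQ)
    let d1 : (V × V × (V ⧸ F)) →ₗ[K] V :=
      (-((LinearMap.id : V →ₗ[K] V) - p • φ)) ∘ₗ
        (LinearMap.fst K V (V ⧸ F)) ∘ₗ (LinearMap.snd K V (V × (V ⧸ F)))
    Function.Injective d0 ∧
    Function.Surjective d1 ∧
    (∀ x : V × V × (V ⧸ F), d1 x = 0 →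
        ∃ w : V ⧸ F, x - (0, 0, w) ∈ LinearMap.range d0) ∧
    (∀ w : V ⧸ F, ((0, 0, w) : V × V × (V ⧸ F)) ∈ LinearMap.range d0 → w = 0) := by
  intro d0 d1
  have hneg : Function.Bijective ⇑(-((LinearMap.id : V →ₗ[K] V) - p • φ)) :=
    neg_bijective.comp h2
  exact ⟨d0_injective h1.1 F, d1_surjective hneg.2 F,
    exists_sub_mem_range_d0_of_d1_eq_zero h1.2 hneg.1 F,
    fun _ ↦ eq_zero_of_mem_range_d0 h1.1⟩

theorem semistable_complex_cohomology
    {K V : Type*} [Field K] [AddCommGroup V] [Module K V] [FiniteDimensional K V]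
    (φ : V →ₗ[K] V) (p : K) (F : Submodule K V)
    (h1 : Function.Bijective ((LinearMap.id : V →ₗ[K] V) - φ))
    (h2 : Function.Bijective ((LinearMap.id : V →ₗ[K] V) - p • φ)) :
    let d0 : V →ₗ[K] V × V × (V ⧸ F) :=
      ((LinearMap.id : V →ₗ[K] V) - φ).prod ((0 : V →ₗ[K] V).prod F.mkQ)
    let d1 : (V × V × (V ⧸ F)) →ₗ[K] V :=
      (-((LinearMap.id : V →ₗ[K] V) - p • φ)) ∘ₗ
        (LinearMap.fst K V (V ⧸ F)) ∘ₗ (LinearMap.snd K V (V × (V ⧸ F)))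
    Function.Injective d0 ∧
    Function.Surjective d1 ∧
    (∀ x : V × V × (V ⧸ F), d1 x = 0 →
        ∃ w : V ⧸ F, x - (0, 0, w) ∈ LinearMap.range d0) ∧
    (∀ w : V ⧸ F, ((0, 0, w) : V × V × (V ⧸ F)) ∈ LinearMap.range d0 → w = 0) :=
  semistable_complex_cohomology_general φ p F h1 h2
end
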